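/- Conditional-expectation representation of CVaR: let X be an integrable real-valued random variable on a probability space and γ ∈ (0,1) a confidence level such that ℙ(−X ≥ VaR_γ(X)) = 1 − γ. Then CVaR_γ(X) = E[−X | −X ≥ VaR_γ(X)], i.e., CVaR_γ(X) is the conditional expectation of the loss given that the loss is at least the value-at-risk threshold. -/

import Mathlib

open MeasureTheory

/-- Value-at-risk of the return `X` at confidence level `β`:
`VaR_β(X) = inf {x ∈ ℝ : ℙ(x + X < 0) ≤ 1 - β}`. -/
noncomputable def VaR {Ω : Type*} [MeasurableSpace Ω] (P : Measure Ω) (X : Ω → ℝ) (β : ℝ) : ℝ :=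
  sInf {x : ℝ | (P {ω | x + X ω < 0}).toReal ≤ 1 - β}

/-- Conditional value-at-risk of the return `X` at confidence level `γ`:
`CVaR_γ(X) = (1/(1-γ)) ∫_γ^1 VaR_β(X) dβ`. -/
noncomputable def CVaR {Ω : Type*} [MeasurableSpace Ω] (P : Measure Ω) (X : Ω → ℝ) (γ : ℝ) : ℝ :=
  (1 / (1 - γ)) * ∫ β in γ..1, VaR P X β


/-!
Let `μ` be the law of the loss `-X` and `F` its distribution function. Then `VaR_β(X)` is the
lower quantile `q β = inf {x | β ≤ F x}`, and right continuity of `F` makes `q` its Galois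
adjoint: `q β ≤ x ↔ β ≤ F x`. Consequently, for `β` uniform on `(γ, 1)`, `q β` exceeds `x` with
mass `1 - max γ (F x)`, which is exactly the `μ`-mass of `(x, ∞) ∩ [q γ, ∞)` as soon as
`[q γ, ∞)` carries mass `1 - γ`. So `q` pushes Lebesgue measure on `(γ, 1)` forward to `μ`
restricted to `[q γ, ∞)`, and integrating the identity gives the claim.
-/

open Set Filter Topology

namespace MeasureTheory.Measure

theorem ext_of_Ioi {α : Type*} [TopologicalSpace α] {_m : MeasurableSpace α}
    [SecondCountableTopology α] [ConditionallyCompleteLinearOrder α] [OrderTopology α]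
    [BorelSpace α] [NoMinOrder α] (μ ν : Measure α) [IsFiniteMeasure μ]
    (h : ∀ a, μ (Ioi a) = ν (Ioi a)) : μ = ν := by
  refine ext_of_Ioc μ ν fun a b hab => ?_
  rw [← Ioi_sdiff_Ioi, measure_sdiff (Ioi_subset_Ioi hab.le) nullMeasurableSet_Ioi
    (measure_ne_top μ _), measure_sdiff (Ioi_subset_Ioi hab.le) nullMeasurableSet_Ioi
    (h b ▸ measure_ne_top μ _), h a, h b]

end MeasureTheory.Measure

namespace ProbabilityTheory

theorem measure_Ioi_eq_ofReal_one_sub_cdf (μ : Measure ℝ) [IsProbabilityMeasure μ] (x : ℝ) :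
    μ (Ioi x) = ENNReal.ofReal (1 - cdf μ x) := by
  rw [← compl_Iic, prob_compl_eq_one_sub measurableSet_Iic, ← ofReal_cdf,
    ENNReal.ofReal_sub _ (cdf_nonneg μ x), ENNReal.ofReal_one]

/-- The lower quantile function of `μ`; outside `(0, 1)` the infimum is taken over an unbounded
or empty set and the value is junk. -/
noncomputable def quantile (μ : Measure ℝ) (β : ℝ) : ℝ :=
  sInf {x | β ≤ cdf μ x}

variable {μ : Measure ℝ} {β γ : ℝ}

theorem quantile_le_iff (hβ : β ∈ Ioo 0 1) (x : ℝ) : quantile μ β ≤ x ↔ β ≤ cdf μ x := by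
  obtain ⟨y₀, hy₀⟩ := ((tendsto_cdf_atBot μ).eventually (gt_mem_nhds hβ.1)).exists
  obtain ⟨y₁, hy₁⟩ := ((tendsto_cdf_atTop μ).eventually (lt_mem_nhds hβ.2)).exists
  have hbdd : BddBelow {x | β ≤ cdf μ x} :=
    ⟨y₀, fun z hz => ((monotone_cdf μ).reflect_lt (hy₀.trans_le hz)).le⟩
  refine ⟨fun h => ?_, fun h => csInf_le hbdd h⟩
  refine le_trans ?_ (monotone_cdf μ h)
  have h_right : ∀ᶠ y in 𝓝[>] quantile μ β, β ≤ cdf μ y := by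
    refine eventually_nhdsWithin_of_forall fun y hy => ?_
    obtain ⟨z, hz, hzy⟩ := (csInf_lt_iff hbdd ⟨y₁, hy₁.le⟩).1 hy
    exact hz.trans (monotone_cdf μ hzy.le)
  exact ge_of_tendsto (((cdf μ).right_continuous _).mono Ioi_subset_Ici_self) h_right

theorem lt_quantile_iff (hβ : β ∈ Ioo 0 1) (x : ℝ) : x < quantile μ β ↔ cdf μ x < β := by
  simpa only [not_le] using (quantile_le_iff hβ x).not

theorem monotoneOn_quantile : MonotoneOn (quantile μ) (Ioo 0 1) := fun _ hβ₁ _ hβ₂ h =>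
  (quantile_le_iff hβ₁ _).2 (h.trans ((quantile_le_iff hβ₂ _).1 le_rfl))

theorem aemeasurable_quantile_restrict (hγ : γ ∈ Ioo 0 1) :
    AEMeasurable (quantile μ) (volume.restrict (Ioo γ 1)) :=
  aemeasurable_restrict_of_monotoneOn measurableSet_Ioo
    (monotoneOn_quantile.mono (Ioo_subset_Ioo_left hγ.1.le))

/-- The level condition says that the atom of `μ` at `quantile μ γ`, if any, is not split. -/
theorem map_quantile_restrict_Ioo [IsProbabilityMeasure μ] (hγ : γ ∈ Ioo 0 1)
    (hlevel : μ (Ici (quantile μ γ)) = ENNReal.ofReal (1 - γ)) :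
    (volume.restrict (Ioo γ 1)).map (quantile μ) = μ.restrict (Ici (quantile μ γ)) := by
  refine (Measure.ext_of_Ioi _ _ fun x => ?_).symm
  have hpre : quantile μ ⁻¹' Ioi x ∩ Ioo γ 1 = Ioo (max γ (cdf μ x)) 1 := by
    ext β
    simp only [mem_inter_iff, mem_preimage, mem_Ioi, mem_Ioo, max_lt_iff]
    constructor
    · rintro ⟨hx, hγβ, hβ1⟩
      exact ⟨⟨hγβ, (lt_quantile_iff ⟨hγ.1.trans hγβ, hβ1⟩ x).1 hx⟩, hβ1⟩
    · rintro ⟨⟨hγβ, hxβ⟩, hβ1⟩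
      exact ⟨(lt_quantile_iff ⟨hγ.1.trans hγβ, hβ1⟩ x).2 hxβ, hγβ, hβ1⟩
  rw [Measure.restrict_apply measurableSet_Ioi,
    Measure.map_apply_of_aemeasurable (aemeasurable_quantile_restrict hγ) measurableSet_Ioi,
    Measure.restrict_apply' measurableSet_Ioo, hpre, Real.volume_Ioo]
  rcases le_or_gt (quantile μ γ) x with hx | hx
  · rw [inter_eq_left.2 (Ioi_subset_Ici hx), measure_Ioi_eq_ofReal_one_sub_cdf,
      max_eq_right ((quantile_le_iff hγ x).1 hx)]
  · rw [inter_eq_right.2 (Ici_subset_Ioi.2 hx), hlevel,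
      max_eq_left ((lt_quantile_iff hγ x).1 hx).le]

theorem setIntegral_quantile_Ioo [IsProbabilityMeasure μ] (hγ : γ ∈ Ioo 0 1)
    (hlevel : μ (Ici (quantile μ γ)) = ENNReal.ofReal (1 - γ)) :
    ∫ β in Ioo γ 1, quantile μ β = ∫ x in Ici (quantile μ γ), x ∂μ := by
  rw [← map_quantile_restrict_Ioo hγ hlevel]
  exact (integral_map (f := id) (aemeasurable_quantile_restrict hγ) aestronglyMeasurable_id).symm

end ProbabilityTheory

open ProbabilityTheory

theorem VaR_eq_quantile_map_neg {Ω : Type*} [MeasurableSpace Ω] (P : Measure Ω)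
    [IsProbabilityMeasure P] {X : Ω → ℝ} (hX : AEMeasurable X P) (β : ℝ) :
    VaR P X β = quantile (P.map (-X)) β := by
  have := Measure.isProbabilityMeasure_map (μ := P) hX.neg
  have htail : ∀ x, P {ω | x + X ω < 0} = P.map (-X) (Ioi x) := fun x => by
    rw [Measure.map_apply_of_aemeasurable hX.neg measurableSet_Ioi]
    congr 1 with ω
    exact (lt_neg_iff_add_neg (a := x)).symm
  unfold VaR quantile
  congr 1
  ext x
  rw [mem_ofPred_eq, mem_ofPred_eq, htail, measure_Ioi_eq_ofReal_one_sub_cdf,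
    ENNReal.toReal_ofReal (sub_nonneg.2 (cdf_le_one _ x)), sub_le_sub_iff_left]

open ProbabilityTheory in
/-- Conditional-expectation representation of CVaR: if `ℙ(-X ≥ VaR_γ(X)) = 1 - γ`, then
`CVaR_γ(X) = E[-X | -X ≥ VaR_γ(X)]`, the conditional expectation of the loss given that the
loss is at least the value-at-risk threshold. -/
theorem CVaR_eq_condExp_loss {Ω : Type*} [MeasurableSpace Ω]
    (P : Measure Ω) [IsProbabilityMeasure P] (X : Ω → ℝ) (hX : Integrable X P)
    (γ : ℝ) (hγ : γ ∈ Set.Ioo (0 : ℝ) 1)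
    (hlevel : (P {ω | VaR P X γ ≤ -X ω}).toReal = 1 - γ) :
    CVaR P X γ = ∫ ω, -X ω ∂(P[|{ω | VaR P X γ ≤ -X ω}]) := by
  have hloss : AEMeasurable (-X) P := hX.aemeasurable.neg
  have := Measure.isProbabilityMeasure_map hloss
  have hVaR : VaR P X = quantile (P.map (-X)) :=
    funext (VaR_eq_quantile_map_neg P hX.aemeasurable)
  have htail : P {ω | VaR P X γ ≤ -X ω} = P.map (-X) (Ici (quantile (P.map (-X)) γ)) := by
    rw [hVaR, Measure.map_apply_of_aemeasurable hloss measurableSet_Ici]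
    rfl
  have hatom : P.map (-X) (Ici (quantile (P.map (-X)) γ)) = ENNReal.ofReal (1 - γ) := by
    rw [← htail, ← hlevel, ENNReal.ofReal_toReal (measure_ne_top _ _)]
  calc CVaR P X γ = (1 - γ)⁻¹ * ∫ β in Ioo γ 1, quantile (P.map (-X)) β := by
        rw [CVaR, hVaR, intervalIntegral.integral_of_le hγ.2.le, integral_Ioc_eq_integral_Ioo,
          one_div]
    _ = (1 - γ)⁻¹ * ∫ x in Ici (quantile (P.map (-X)) γ), x ∂(P.map (-X)) := by
        rw [setIntegral_quantile_Ioo hγ hatom]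
    _ = ∫ ω, -X ω ∂(P[|{ω | VaR P X γ ≤ -X ω}]) := by
        rw [ProbabilityTheory.cond, integral_smul_measure, ENNReal.toReal_inv, hlevel, smul_eq_mul,
          hVaR]
        exact congrArg _
          (setIntegral_map (f := id) measurableSet_Ici aestronglyMeasurable_id hloss)
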